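/- arXiv:1808.06682 — 2 statements merged into one kernel-verified Lean document; each statement's English description precedes it below -/
import Mathlib

section
/- Let 𝔸 be a Banach algebra over ℝ with unit and let A : ℝ → 𝔸 be a C^∞ map. Then the map t ↦ Φ^A(t), defined using the restriction of A to [0,1], is C^∞ on the interval [0,1] (smooth in the sense of ContDiffOn of every order, with one-sided derivatives at the endpoints). (Smoothness claim of the paper's Lemma 3.1, specialized to a point base.) -/
open MeasureTheory Set

variable {𝔸 : Type*} [NormedRing 𝔸] [NormedAlgebra ℝ 𝔸] [CompleteSpace 𝔸]

/-- Nested Chen iterated integral with accumulated product `x`: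
`chenAux A n x t = ∫₀ᵗ ∫₀^{s₁} ⋯ ∫₀^{sₙ₋₁} x * A s₁ * ⋯ * A sₙ dsₙ ⋯ ds₁`. -/
noncomputable def chenAux (A : ℝ → 𝔸) : ℕ → 𝔸 → ℝ → 𝔸
  | 0, x, _ => x
  | n + 1, x, t => ∫ s in (0:ℝ)..t, chenAux A n (x * A s) s

/-- The `n`-th Chen iterated integral
`Iₙ^A(t) = ∫₀ᵗ ∫₀^{s₁} ⋯ ∫₀^{sₙ₋₁} A(s₁) * A(s₂) * ⋯ * A(sₙ) dsₙ ⋯ ds₁`. -/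
noncomputable def chenI (A : ℝ → 𝔸) (n : ℕ) (t : ℝ) : 𝔸 :=
  chenAux A n 1 t

/-- The iterated-integral series (time-ordered exponential) `Φ^A(t) = ∑ₙ Iₙ^A(t)`. -/
noncomputable def chenPhi (A : ℝ → 𝔸) (t : ℝ) : 𝔸 :=
  ∑' n, chenI A n t

/-! `Φ^A` is the Picard–Dyson series of the linear equation `Φ' = A Φ`, `Φ(0) = 1`. The recursion
`Iₙ₊₁(t) = ∫₀ᵗ A(s) Iₙ(s) ds` gives `‖Iₙ(t)‖ ≤ ‖1‖ (M |t|)ⁿ / n!` whenever `‖A‖ ≤ M` between `0`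
and `t`, so the series converges locally uniformly on all of `ℝ` and may be integrated termwise:
`Φ(t) = 1 + ∫₀ᵗ A Φ`. Hence `Φ' = A Φ` everywhere, and every order of smoothness of `A` passes to
`Φ` by bootstrapping. -/

open intervalIntegral Nat Interval

lemma contDiff_of_hasDerivAt_mul {E : Type*} [NormedRing E] [NormedAlgebra ℝ E]
    {A f : ℝ → E} {n : ℕ∞} (hA : ContDiff ℝ n A)
    (hf : ∀ t, HasDerivAt f (A t * f t) t) : ContDiff ℝ n f := by
  have hderiv : deriv f = fun t => A t * f t := funext fun t => (hf t).deriv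
  induction n using ENat.nat_induction with
  | zero => exact contDiff_zero.2 (continuous_iff_continuousAt.2 fun t => (hf t).continuousAt)
  | succ n ih =>
    have hA' : ContDiff ℝ n A := hA.of_le (by exact_mod_cast (Nat.le_succ n))
    rw [show ((n.succ : ℕ∞) : WithTop ℕ∞) = (n : WithTop ℕ∞) + 1 by norm_cast,
      contDiff_succ_iff_deriv]
    exact ⟨fun t => (hf t).differentiableAt, by simp, hderiv ▸ hA'.mul (ih hA')⟩
  | top ih => exact contDiff_infty.2 fun n => ih n (hA.of_le (by exact_mod_cast le_top))

section
variable {A : ℝ → 𝔸}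

-- Joint induction: pulling `x` out of the integral needs the integrand to be integrable.
private lemma continuous_chenI_and_chenAux_eq (hA : Continuous A) (n : ℕ) :
    Continuous (chenI A n) ∧ ∀ x t, chenAux A n x t = x * chenI A n t := by
  induction n with
  | zero => exact ⟨continuous_const, fun x _ => (mul_one x).symm⟩
  | succ n ih =>
    obtain ⟨hcont, hmul⟩ := ih
    have hint : Continuous fun s => A s * chenI A n s := hA.mul hcont
    have hsucc : ∀ x t, chenAux A (n + 1) x t = x * ∫ s in (0:ℝ)..t, A s * chenI A n s := by
      intro x t
      calc chenAux A (n + 1) x t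
          = ∫ s in (0:ℝ)..t, ContinuousLinearMap.mul ℝ 𝔸 x (A s * chenI A n s) := by
            simp only [chenAux, hmul, ContinuousLinearMap.mul_apply', mul_assoc]
        _ = x * ∫ s in (0:ℝ)..t, A s * chenI A n s :=
            (ContinuousLinearMap.mul ℝ 𝔸 x).intervalIntegral_comp_comm
              (hint.intervalIntegrable 0 t)
    have hI : chenI A (n + 1) = fun t => ∫ s in (0:ℝ)..t, A s * chenI A n s := by
      funext t; rw [chenI, hsucc, one_mul]
    exact ⟨hI ▸ continuous_primitive (fun a b => hint.intervalIntegrable a b) 0,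
      fun x t => by rw [hsucc, hI]⟩

lemma continuous_chenI (hA : Continuous A) (n : ℕ) : Continuous (chenI A n) :=
  (continuous_chenI_and_chenAux_eq hA n).1

lemma chenAux_eq_mul_chenI (hA : Continuous A) (n : ℕ) (x : 𝔸) (t : ℝ) :
    chenAux A n x t = x * chenI A n t :=
  (continuous_chenI_and_chenAux_eq hA n).2 x t

lemma chenI_succ (hA : Continuous A) (n : ℕ) (t : ℝ) :
    chenI A (n + 1) t = ∫ s in (0:ℝ)..t, A s * chenI A n s := by
  show ∫ s in (0:ℝ)..t, chenAux A n (1 * A s) s = _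
  simp only [chenAux_eq_mul_chenI hA, one_mul]

lemma norm_chenI_le (hA : Continuous A) {M t : ℝ} (hM : ∀ s ∈ uIcc 0 t, ‖A s‖ ≤ M) (n : ℕ) :
    ‖chenI A n t‖ ≤ ‖(1:𝔸)‖ * ((M * |t|) ^ n / n !) := by
  induction n generalizing t with
  | zero => simp [chenI, chenAux]
  | succ n ih =>
    have hM0 : 0 ≤ M := (norm_nonneg _).trans (hM 0 left_mem_uIcc)
    set c := M * ‖(1:𝔸)‖ * M ^ n / (n !)
    have hbound : ∀ s ∈ Ι (0:ℝ) t, ‖A s * chenI A n s‖ ≤ c * |s - 0| ^ n := by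
      intro s hs
      have hsub : uIcc 0 s ⊆ uIcc 0 t := uIcc_subset_uIcc_left (uIoc_subset_uIcc hs)
      calc ‖A s * chenI A n s‖ ≤ ‖A s‖ * ‖chenI A n s‖ := norm_mul_le _ _
        _ ≤ M * (‖(1:𝔸)‖ * ((M * |s|) ^ n / n !)) :=
          mul_le_mul (hM s (hsub right_mem_uIcc)) (ih fun r hr => hM r (hsub hr))
            (norm_nonneg _) hM0
        _ = c * |s - 0| ^ n := by rw [sub_zero, mul_pow]; ring
    calc ‖chenI A (n + 1) t‖ ≤ ∫ s in Ι 0 t, ‖A s * chenI A n s‖ := by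
          rw [chenI_succ hA]; exact norm_integral_le_integral_norm_uIoc
      _ ≤ ∫ s in Ι 0 t, c * |s - 0| ^ n :=
          setIntegral_mono_on (hA.mul (continuous_chenI hA n)).norm.integrableOn_uIoc
            (by fun_prop : Continuous fun s : ℝ => c * |s - 0| ^ n).integrableOn_uIoc
            measurableSet_uIoc hbound
      _ = c * (|t - 0| ^ (n + 1) / (n + 1)) := by
          rw [MeasureTheory.integral_const_mul, integral_pow_abs_sub_uIoc]
      _ = ‖(1:𝔸)‖ * ((M * |t|) ^ (n + 1) / (n + 1)!) := by
          rw [sub_zero, factorial_succ]; push_cast; simp only [c]; field_simp; ring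

lemma norm_chenI_le_of_mem_Icc (hA : Continuous A) {M T t : ℝ}
    (hM : ∀ s ∈ Icc (-T) T, ‖A s‖ ≤ M) (ht : t ∈ Icc (-T) T) (n : ℕ) :
    ‖chenI A n t‖ ≤ ‖(1:𝔸)‖ * ((M * T) ^ n / n !) := by
  have hsub : uIcc 0 t ⊆ Icc (-T) T :=
    uIcc_subset_Icc ⟨by linarith [ht.1, ht.2], by linarith [ht.1, ht.2]⟩ ht
  have hM0 : 0 ≤ M := (norm_nonneg _).trans (hM t ht)
  refine (norm_chenI_le hA (fun s hs => hM s (hsub hs)) n).trans ?_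
  gcongr
  exact abs_le.2 ht

lemma summable_chenI (hA : Continuous A) (t : ℝ) : Summable (chenI A · t) := by
  obtain ⟨M, hM⟩ :=
    isCompact_Icc.exists_bound_of_continuousOn (s := Icc (-|t|) |t|) hA.continuousOn
  exact .of_norm_bounded ((Real.summable_pow_div_factorial _).mul_left _)
    (norm_chenI_le_of_mem_Icc hA hM (abs_le.1 le_rfl))

lemma continuous_chenPhi (hA : Continuous A) : Continuous (chenPhi A) := by
  refine continuous_iff_continuousAt.2 fun t => ?_
  set T := |t| + 1
  obtain ⟨M, hM⟩ := isCompact_Icc.exists_bound_of_continuousOn (s := Icc (-T) T) hA.continuousOn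
  have hon : ContinuousOn (chenPhi A) (Icc (-T) T) :=
    continuousOn_tsum (fun n => (continuous_chenI hA n).continuousOn)
      ((Real.summable_pow_div_factorial _).mul_left _)
      (fun n _ hs => norm_chenI_le_of_mem_Icc hA hM hs n)
  exact hon.continuousAt (Icc_mem_nhds (by linarith [neg_abs_le t]) (by linarith [le_abs_self t]))

lemma chenPhi_eq_one_add_integral (hA : Continuous A) (t : ℝ) :
    chenPhi A t = 1 + ∫ s in (0:ℝ)..t, A s * chenPhi A s := by
  obtain ⟨M, hM⟩ :=
    isCompact_Icc.exists_bound_of_continuousOn (s := Icc (-|t|) |t|) hA.continuousOn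
  have hM0 : 0 ≤ M := (norm_nonneg _).trans (hM 0 ⟨by simp, abs_nonneg t⟩)
  have hsub : Ι 0 t ⊆ Icc (-|t|) |t| :=
    uIoc_subset_uIcc.trans (uIcc_subset_Icc ⟨by simp, abs_nonneg t⟩ (abs_le.1 le_rfl))
  have hsum : HasSum (fun n => ∫ s in (0:ℝ)..t, A s * chenI A n s)
      (∫ s in (0:ℝ)..t, A s * chenPhi A s) := by
    refine hasSum_integral_of_dominated_convergence
      (fun n _ => M * (‖(1:𝔸)‖ * ((M * |t|) ^ n / n !)))
      (fun n => (hA.mul (continuous_chenI hA n)).aestronglyMeasurable) (fun n => ?_) ?_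
      intervalIntegrable_const ?_
    · exact ae_of_all _ fun s hs => (norm_mul_le _ _).trans (mul_le_mul (hM s (hsub hs))
        (norm_chenI_le_of_mem_Icc hA hM (hsub hs) n) (norm_nonneg _) hM0)
    · exact ae_of_all _ fun _ _ => ((Real.summable_pow_div_factorial _).mul_left _).mul_left M
    · exact ae_of_all _ fun s _ => (summable_chenI hA s).hasSum.mul_left (A s)
  rw [← funext (chenI_succ hA · t)] at hsum
  exact (hsum.zero_add (f := (chenI A · t))).tsum_eq

lemma hasDerivAt_chenPhi (hA : Continuous A) (t : ℝ) :
    HasDerivAt (chenPhi A) (A t * chenPhi A t) t :=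
  (((hA.mul (continuous_chenPhi hA)).integral_hasStrictDerivAt 0 t).hasDerivAt.const_add 1
    ).congr_of_eventuallyEq (.of_forall (chenPhi_eq_one_add_integral hA))

end

/-- for a smooth `A`, the time-ordered exponential `Φ^A` is `C^∞` on `[0,1]`
(smoothness claim of Lemma 3.1 at a point base). -/
theorem chenPhi_contDiffOn (A : ℝ → 𝔸) (hA : ContDiff ℝ (⊤ : ℕ∞) A) :
    ContDiffOn ℝ (⊤ : ℕ∞) (chenPhi A) (Icc 0 1) :=
  (contDiff_of_hasDerivAt_mul hA (hasDerivAt_chenPhi hA.continuous)).contDiffOn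
end

section
/- Let 𝔸 be a Banach algebra over ℝ with unit, let A, B : [0,1] → 𝔸 be continuous, and let g : [0,1] → 𝔸 be differentiable on [0,1] (one-sidedly at the endpoints) with g(t) a unit of 𝔸 for every t ∈ [0,1]. Suppose A(t) = g(t)⁻¹·B(t)·g(t) − g(t)⁻¹·g′(t) for all t ∈ [0,1], and suppose Ψ : [0,1] → 𝔸 is differentiable on [0,1] with Ψ′(t) = B(t)·Ψ(t) for all t ∈ [0,1] and Ψ(0) = 1. Then the map y(t) = g(t)⁻¹·Ψ(t)·g(0) is differentiable on [0,1] and satisfies y′(t) = A(t)·y(t) for all t ∈ [0,1] and y(0) = 1. -/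
open MeasureTheory Set

variable {𝔸 : Type*} [NormedRing 𝔸] [NormedAlgebra ℝ 𝔸] [CompleteSpace 𝔸]

/-! By the product rule and `(g⁻¹)' = -g⁻¹ g' g⁻¹`, the derivative of `y = g⁻¹ Ψ g(0)` is
`(-g⁻¹ g' g⁻¹ Ψ + g⁻¹ B Ψ) g(0)`; inserting `g g⁻¹ = 1` in front of `Ψ` in the second term turns
this into `(g⁻¹ B g - g⁻¹ g') y = A y`. -/

theorem gauge_product_rule_eq {R : Type*} [Ring R] {x : R} (hx : IsUnit x) (x' b p c : R) :
    (-(Ring.inverse x * x' * Ring.inverse x) * p + Ring.inverse x * (b * p)) * c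
      = (Ring.inverse x * b * x - Ring.inverse x * x') * (Ring.inverse x * p * c) := by
  have hcancel : x * (Ring.inverse x * (p * c)) = p * c := by
    rw [← mul_assoc, Ring.mul_inverse_cancel x hx, one_mul]
  simp only [sub_mul, add_mul, neg_mul, mul_assoc, hcancel]
  abel

section GaugeTransform

variable {𝕜 R : Type*} [NontriviallyNormedField 𝕜] [NormedRing R] [NormedAlgebra 𝕜 R]
  [HasSummableGeomSeries R] {h : 𝕜 → R} {h' : R} {s : Set 𝕜} {t : 𝕜}

theorem HasDerivWithinAt.ringInverse (hh : HasDerivWithinAt h h' s t) (ht : IsUnit (h t)) :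
    HasDerivWithinAt (fun u => Ring.inverse (h u))
      (-(Ring.inverse (h t) * h' * Ring.inverse (h t))) s t := by
  obtain ⟨v, hv⟩ := ht
  have hinv : HasFDerivAt Ring.inverse _ (h t) := hv ▸ hasFDerivAt_ringInverse (𝕜 := 𝕜) v
  simpa [← hv, Function.comp_def] using hinv.comp_hasDerivWithinAt t hh

theorem HasDerivWithinAt.gaugeTransform {Ψ : 𝕜 → R} {b : R} (hh : HasDerivWithinAt h h' s t)
    (ht : IsUnit (h t)) (hΨ : HasDerivWithinAt Ψ (b * Ψ t) s t) (c : R) :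
    HasDerivWithinAt (fun u => Ring.inverse (h u) * Ψ u * c)
      ((Ring.inverse (h t) * b * h t - Ring.inverse (h t) * h') *
        (Ring.inverse (h t) * Ψ t * c)) s t := by
  rw [← gauge_product_rule_eq ht]
  exact ((hh.ringInverse ht).mul hΨ).mul_const c

end GaugeTransform

theorem gauge_transform_solves_general (A B : ℝ → 𝔸)
    (g g' : ℝ → 𝔸)
    (hg : ∀ t ∈ Icc (0:ℝ) 1, HasDerivWithinAt g (g' t) (Icc 0 1) t)
    (hunit : ∀ t ∈ Icc (0:ℝ) 1, IsUnit (g t))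
    (hgauge : ∀ t ∈ Icc (0:ℝ) 1,
      A t = Ring.inverse (g t) * B t * g t - Ring.inverse (g t) * g' t)
    (Ψ : ℝ → 𝔸)
    (hΨ : ∀ t ∈ Icc (0:ℝ) 1, HasDerivWithinAt Ψ (B t * Ψ t) (Icc 0 1) t)
    (hΨ0 : Ψ 0 = 1) :
    (∀ t ∈ Icc (0:ℝ) 1,
      HasDerivWithinAt (fun u => Ring.inverse (g u) * Ψ u * g 0)
        (A t * (Ring.inverse (g t) * Ψ t * g 0)) (Icc 0 1) t) ∧
    Ring.inverse (g 0) * Ψ 0 * g 0 = 1 := by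
  refine ⟨fun t ht => ?_, ?_⟩
  · rw [hgauge t ht]
    exact (hg t ht).gaugeTransform (hunit t ht) (hΨ t ht) (g 0)
  · rw [hΨ0, mul_one, Ring.inverse_mul_cancel _ (hunit 0 (left_mem_Icc.2 zero_le_one))]

/-- the gauge transform `y(t) = g(t)⁻¹ · Ψ(t) · g(0)` of a solution `Ψ` of
`Ψ' = B·Ψ`, `Ψ(0) = 1` solves `y' = A·y`, `y(0) = 1`, where
`A = g⁻¹·B·g − g⁻¹·g'` (core computation of Proposition 3.3). -/
theorem gauge_transform_solves (A B : ℝ → 𝔸)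
    (hA : ContinuousOn A (Icc 0 1)) (hB : ContinuousOn B (Icc 0 1))
    (g g' : ℝ → 𝔸)
    (hg : ∀ t ∈ Icc (0:ℝ) 1, HasDerivWithinAt g (g' t) (Icc 0 1) t)
    (hunit : ∀ t ∈ Icc (0:ℝ) 1, IsUnit (g t))
    (hgauge : ∀ t ∈ Icc (0:ℝ) 1,
      A t = Ring.inverse (g t) * B t * g t - Ring.inverse (g t) * g' t)
    (Ψ : ℝ → 𝔸)
    (hΨ : ∀ t ∈ Icc (0:ℝ) 1, HasDerivWithinAt Ψ (B t * Ψ t) (Icc 0 1) t)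
    (hΨ0 : Ψ 0 = 1) :
    (∀ t ∈ Icc (0:ℝ) 1,
      HasDerivWithinAt (fun u => Ring.inverse (g u) * Ψ u * g 0)
        (A t * (Ring.inverse (g t) * Ψ t * g 0)) (Icc 0 1) t) ∧
    Ring.inverse (g 0) * Ψ 0 * g 0 = 1 :=
  gauge_transform_solves_general A B g g' hg hunit hgauge Ψ hΨ hΨ0
end
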